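/- One-cycle estimate for the splitting proximal point algorithm: let (H,d) be a Hadamard space, f₁,…,f_N : H → (−∞,∞] proper convex lower semicontinuous functions, f = Σₙ fₙ, λ > 0, and L > 0. Suppose y₀, y₁,…,y_N ∈ H are such that for each n = 1,…,N the point yₙ is a minimizer of z ↦ fₙ(z) + (1/(2λ))·d(y_{n−1},z)², and fₙ(y₀) − fₙ(yₙ) ≤ L·d(y₀,yₙ) as well as fₙ(y_{n−1}) − fₙ(yₙ) ≤ L·d(y_{n−1},yₙ). Then for every y ∈ H with f(y) < ∞, d(y_N,y)² ≤ d(y₀,y)² − 2λ·(f(y₀) − f(y)) + 2λ²·L²·N·(N+1). -/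

import Mathlib

open Filter Topology

/-- A Hadamard space structure on a metric space `H`: a geodesic combination map
`geo x y t = (1-t)x ⊕ ty` satisfying the geodesic axioms and the CAT(0) inequality.
(Completeness is imposed via the `CompleteSpace` instance in the theorems.) -/
structure Hadamard (H : Type*) [MetricSpace H] : Type _ where
  geo : H → H → ℝ → H
  geo_zero : ∀ x y : H, geo x y 0 = x
  geo_one : ∀ x y : H, geo x y 1 = y
  geo_dist : ∀ x y : H, ∀ s ∈ Set.Icc (0 : ℝ) 1, ∀ t ∈ Set.Icc (0 : ℝ) 1,
    dist (geo x y s) (geo x y t) = |s - t| * dist x y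
  cat0 : ∀ z x y : H, ∀ t ∈ Set.Icc (0 : ℝ) 1,
    dist z (geo x y t) ^ 2
      ≤ (1 - t) * dist z x ^ 2 + t * dist z y ^ 2 - t * (1 - t) * dist x y ^ 2

/-- A function `f : H → (-∞,∞]` is (geodesically) convex if along every geodesic
`t ↦ (1-t)x ⊕ ty` it satisfies the convexity inequality. -/
def GeoConvex {H : Type*} [MetricSpace H] (G : Hadamard H) (f : H → EReal) : Prop :=
  ∀ x y : H, ∀ t ∈ Set.Icc (0 : ℝ) 1,
    f (G.geo x y t) ≤ ((1 - t : ℝ) : EReal) * f x + ((t : ℝ) : EReal) * f y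

/-!
Each proximal step is a descent step: comparing `y n` with the points of the geodesic towards a
competitor `w`, convexity of `f n` and the CAT(0) inequality give
`2λ (f n (y n) - f n w) ≤ d(y (n-1), w)² - d(y (n-1), y n)² - d(y n, w)²`.
With `w = z` these inequalities telescope over the cycle. With `w = y (n-1)` and the Lipschitz-type
bound they show that every step moves by at most `λL`, so `d(y 0, y n) ≤ nλL`, and replacing
`f n (y n)` by `f n (y 0)` in the telescoped sum costs at most `L · nλL ≤ λL²N` per step.
-/

open Finset

namespace EReal

@[norm_cast]
lemma coe_finsetSum {ι : Type*} (s : Finset ι) (g : ι → ℝ) :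
    ((∑ i ∈ s, g i : ℝ) : EReal) = ∑ i ∈ s, (g i : EReal) :=
  map_sum (⟨⟨(↑), coe_zero⟩, coe_add⟩ : ℝ →+ EReal) g s

lemma ne_top_of_sum_ne_top {ι : Type*} {s : Finset ι} {g : ι → EReal}
    (hg : ∀ i ∈ s, g i ≠ ⊥) (h : ∑ i ∈ s, g i ≠ ⊤) {i : ι} (hi : i ∈ s) : g i ≠ ⊤ := by
  classical
  have hrest : ∑ j ∈ s.erase i, g j ≠ ⊥ :=
    sum_induction _ (· ≠ ⊥) (fun _ _ ha hb => add_ne_bot_iff.2 ⟨ha, hb⟩) zero_ne_bot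
      fun j hj => hg j (mem_of_mem_erase hj)
  rintro htop
  rw [← add_sum_erase _ _ hi, htop, top_add_of_ne_bot hrest] at h
  exact h rfl

lemma ne_top_of_sub_le_coe {a b : EReal} {c : ℝ} (h : a - b ≤ c) (hb : b ≠ ⊤) : a ≠ ⊤ := by
  rintro rfl
  rw [top_sub hb, top_le_iff] at h
  exact coe_ne_top c h

lemma toReal_sub_toReal_le {a b : EReal} {c : ℝ} (h : a - b ≤ c) (ha : a ≠ ⊥) (hb : b ≠ ⊤)
    (hb' : b ≠ ⊥) : a.toReal - b.toReal ≤ c := by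
  lift a to ℝ using ⟨ne_top_of_sub_le_coe h hb, ha⟩
  lift b to ℝ using ⟨hb, hb'⟩
  exact_mod_cast h

end EReal

lemma le_of_forall_le_add_mul {a b c : ℝ} (h : ∀ t ∈ Set.Ioo (0 : ℝ) 1, a ≤ b + t * c) :
    a ≤ b := by
  have hlim : Tendsto (fun t : ℝ => b + t * c) (𝓝[>] 0) (𝓝 b) := by
    have : Tendsto (fun t : ℝ => b + t * c) (𝓝 0) (𝓝 (b + 0 * c)) :=
      (continuous_const.add (continuous_id.mul continuous_const)).tendsto 0
    simpa using this.mono_left nhdsWithin_le_nhds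
  exact ge_of_tendsto hlim (eventually_of_mem (Ioo_mem_nhdsGT one_pos) h)

lemma le_add_sum_of_le_pred_add {N : ℕ} {u v : ℕ → ℝ}
    (h : ∀ n ∈ Icc 1 N, u n ≤ u (n - 1) + v n) :
    u N ≤ u 0 + ∑ n ∈ Icc 1 N, v n := by
  induction N with
  | zero => simp
  | succ N ih =>
    rw [sum_Icc_succ_top (by omega)]
    have hN := h (N + 1) (by simp)
    have := ih fun n hn => h n (Icc_subset_Icc_right (by omega) hn)
    simp only [add_tsub_cancel_right] at hN
    linarith

lemma dist_le_mul_of_dist_pred_le {X : Type*} [PseudoMetricSpace X] {y : ℕ → X} {N : ℕ}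
    {C : ℝ} (h : ∀ n ∈ Icc 1 N, dist (y (n - 1)) (y n) ≤ C) :
    dist (y 0) (y N) ≤ N * C := by
  have := le_add_sum_of_le_pred_add (u := fun n => dist (y 0) (y n)) (v := fun _ => C) fun n hn =>
    (dist_triangle _ _ _).trans (add_le_add_right (h n hn) _)
  simpa using this

section Hadamard

variable {H : Type*} [MetricSpace H]

def IsProxPoint (f : H → EReal) (lam : ℝ) (p q : H) : Prop :=
  ∀ x : H, f q + ((1 / (2 * lam) * dist p q ^ 2 : ℝ) : EReal)
    ≤ f x + ((1 / (2 * lam) * dist p x ^ 2 : ℝ) : EReal)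

namespace IsProxPoint

variable {f : H → EReal} {lam : ℝ} {p q : H}

lemma ne_top (h : IsProxPoint f lam p q) {x : H} (hx : f x ≠ ⊤) : f q ≠ ⊤ := by
  intro htop
  have hle := h x
  rw [htop, EReal.top_add_coe, top_le_iff] at hle
  exact EReal.add_ne_top hx (EReal.coe_ne_top _) hle

theorem two_mul_sub_le (h : IsProxPoint f lam p q) (G : Hadamard H) (hf : GeoConvex G f)
    (hbot : ∀ x, f x ≠ ⊥) (hlam : 0 < lam) {w : H} (hw : f w ≠ ⊤) :
    2 * lam * ((f q).toReal - (f w).toReal) ≤ dist p w ^ 2 - dist p q ^ 2 - dist q w ^ 2 := by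
  set a := (f q).toReal
  set b := (f w).toReal
  have ha : f q = a := (EReal.coe_toReal (h.ne_top hw) (hbot q)).symm
  have hb : f w = b := (EReal.coe_toReal hw (hbot w)).symm
  refine le_of_forall_le_add_mul (c := dist q w ^ 2) fun t ht => ?_
  have ht' : t ∈ Set.Icc (0 : ℝ) 1 := Set.Ioo_subset_Icc_self ht
  have hmin : a + 1 / (2 * lam) * dist p q ^ 2
      ≤ (1 - t) * a + t * b + 1 / (2 * lam) * dist p (G.geo q w t) ^ 2 := by
    have hconv := hf q w t ht'
    have hprox := h (G.geo q w t)
    rw [ha, hb] at hconv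
    rw [ha] at hprox
    exact_mod_cast hprox.trans (add_le_add_left hconv _)
  have hmin' : 2 * lam * a + dist p q ^ 2
      ≤ 2 * lam * ((1 - t) * a + t * b) + dist p (G.geo q w t) ^ 2 := by
    have := mul_le_mul_of_nonneg_left hmin (by positivity : (0 : ℝ) ≤ 2 * lam)
    field_simp at this
    linarith
  have hcat := G.cat0 p q w t ht'
  have hscaled : t * (2 * lam * (a - b))
      ≤ t * (dist p w ^ 2 - dist p q ^ 2 - dist q w ^ 2 + t * dist q w ^ 2) := by
    nlinarith
  exact le_of_mul_le_mul_left hscaled ht.1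

lemma dist_sq_le (h : IsProxPoint f lam p q) (G : Hadamard H) (hf : GeoConvex G f)
    (hbot : ∀ x, f x ≠ ⊥) (hlam : 0 < lam) {w : H} (hw : f w ≠ ⊤) :
    dist q w ^ 2 ≤ dist p w ^ 2 - 2 * lam * ((f q).toReal - (f w).toReal) := by
  have := h.two_mul_sub_le G hf hbot hlam hw
  nlinarith [sq_nonneg (dist p q)]

lemma dist_le (h : IsProxPoint f lam p q) (G : Hadamard H) (hf : GeoConvex G f)
    (hbot : ∀ x, f x ≠ ⊥) (hlam : 0 < lam) {L : ℝ} (hL : 0 ≤ L) (hq : f q ≠ ⊤)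
    (hlip : f p - f q ≤ ((L * dist p q : ℝ) : EReal)) : dist p q ≤ lam * L := by
  have hdesc := h.two_mul_sub_le G hf hbot hlam (EReal.ne_top_of_sub_le_coe hlip hq)
  have hlip' := EReal.toReal_sub_toReal_le hlip (hbot p) hq (hbot q)
  rw [dist_self, dist_comm q p] at hdesc
  nlinarith [dist_nonneg (x := p) (y := q), mul_nonneg hlam.le hL]

end IsProxPoint

end Hadamard

theorem dist_sq_le_of_descent_steps {X : Type*} [PseudoMetricSpace X] {N : ℕ} {lam L : ℝ}
    (hlam : 0 ≤ lam) (hL : 0 ≤ L) {y : ℕ → X} {z : X} {a b c : ℕ → ℝ}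
    (hdesc : ∀ n ∈ Icc 1 N, dist (y n) z ^ 2 ≤ dist (y (n - 1)) z ^ 2 - 2 * lam * (a n - b n))
    (hstep : ∀ n ∈ Icc 1 N, dist (y (n - 1)) (y n) ≤ lam * L)
    (hlip : ∀ n ∈ Icc 1 N, c n - a n ≤ L * dist (y 0) (y n)) :
    dist (y N) z ^ 2 ≤ dist (y 0) z ^ 2 - 2 * lam * (∑ n ∈ Icc 1 N, c n - ∑ n ∈ Icc 1 N, b n)
      + 2 * lam ^ 2 * L ^ 2 * N * (N + 1) := by
  have htel : dist (y N) z ^ 2 ≤ dist (y 0) z ^ 2 + ∑ n ∈ Icc 1 N, -(2 * lam * (a n - b n)) :=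
    le_add_sum_of_le_pred_add fun n hn => (hdesc n hn).trans_eq (sub_eq_add_neg _ _)
  have hdrift : ∀ n ∈ Icc 1 N, c n - a n ≤ L * (N * (lam * L)) := by
    intro n hn
    have hnN : (n : ℝ) ≤ N := by exact_mod_cast (mem_Icc.1 hn).2
    have hdist : dist (y 0) (y n) ≤ n * (lam * L) :=
      dist_le_mul_of_dist_pred_le fun m hm =>
        hstep m (Icc_subset_Icc_right (mem_Icc.1 hn).2 hm)
    calc c n - a n ≤ L * dist (y 0) (y n) := hlip n hn
      _ ≤ L * (N * (lam * L)) := by gcongr; exact hdist.trans (by gcongr)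
  have hsum : ∑ n ∈ Icc 1 N, (c n - a n) ≤ N * (L * (N * (lam * L))) := by
    simpa using sum_le_card_nsmul _ _ _ hdrift
  rw [sum_neg_distrib, ← mul_sum, sum_sub_distrib] at htel
  rw [sum_sub_distrib] at hsum
  nlinarith [mul_nonneg (mul_nonneg (sq_nonneg lam) (sq_nonneg L)) (Nat.cast_nonneg (α := ℝ) N)]

theorem one_cycle_estimate_general
    {H : Type*} [MetricSpace H] (G : Hadamard H)
    (N : ℕ)
    (fs : ℕ → H → EReal)
    (hfs_ne_bot : ∀ n ∈ Finset.Icc 1 N, ∀ x : H, fs n x ≠ ⊥)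
    (hfs_conv : ∀ n ∈ Finset.Icc 1 N, GeoConvex G (fs n))
    (lam L : ℝ) (hlam : 0 < lam) (hL : 0 < L)
    (y : ℕ → H)
    (hmin : ∀ n ∈ Finset.Icc 1 N, ∀ z : H,
      fs n (y n) + ((1 / (2 * lam) * dist (y (n - 1)) (y n) ^ 2 : ℝ) : EReal)
        ≤ fs n z + ((1 / (2 * lam) * dist (y (n - 1)) z ^ 2 : ℝ) : EReal))
    (hlip₀ : ∀ n ∈ Finset.Icc 1 N,
      fs n (y 0) - fs n (y n) ≤ ((L * dist (y 0) (y n) : ℝ) : EReal))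
    (hlip₁ : ∀ n ∈ Finset.Icc 1 N,
      fs n (y (n - 1)) - fs n (y n) ≤ ((L * dist (y (n - 1)) (y n) : ℝ) : EReal))
    (z : H) (hz : (∑ n ∈ Finset.Icc 1 N, fs n z) < ⊤) :
    ((dist (y N) z ^ 2 : ℝ) : EReal)
      ≤ ((dist (y 0) z ^ 2 : ℝ) : EReal)
          - ((2 * lam : ℝ) : EReal)
            * ((∑ n ∈ Finset.Icc 1 N, fs n (y 0)) - ∑ n ∈ Finset.Icc 1 N, fs n z)
          + ((2 * lam ^ 2 * L ^ 2 * (N : ℝ) * ((N : ℝ) + 1) : ℝ) : EReal) := by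
  have hprox : ∀ n ∈ Icc 1 N, IsProxPoint (fs n) lam (y (n - 1)) (y n) := hmin
  have hz_fin : ∀ n ∈ Icc 1 N, fs n z ≠ ⊤ := fun n hn =>
    EReal.ne_top_of_sum_ne_top (fun m hm => hfs_ne_bot m hm z) hz.ne hn
  have hyn_fin : ∀ n ∈ Icc 1 N, fs n (y n) ≠ ⊤ := fun n hn => (hprox n hn).ne_top (hz_fin n hn)
  have hy0_fin : ∀ n ∈ Icc 1 N, fs n (y 0) ≠ ⊤ := fun n hn =>
    EReal.ne_top_of_sub_le_coe (hlip₀ n hn) (hyn_fin n hn)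
  have key := dist_sq_le_of_descent_steps (c := fun n => (fs n (y 0)).toReal) hlam.le hL.le
    (fun n hn => (hprox n hn).dist_sq_le G (hfs_conv n hn) (hfs_ne_bot n hn) hlam (hz_fin n hn))
    (fun n hn => (hprox n hn).dist_le G (hfs_conv n hn) (hfs_ne_bot n hn) hlam hL.le
      (hyn_fin n hn) (hlip₁ n hn))
    (fun n hn => EReal.toReal_sub_toReal_le (hlip₀ n hn) (hfs_ne_bot n hn _) (hyn_fin n hn)
      (hfs_ne_bot n hn _))
  have hreal : ∀ n ∈ Icc 1 N, ∀ x, fs n x ≠ ⊤ → fs n x = (fs n x).toReal := fun n hn x hx =>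
    (EReal.coe_toReal hx (hfs_ne_bot n hn x)).symm
  rw [sum_congr rfl fun n hn => hreal n hn _ (hy0_fin n hn),
    sum_congr rfl fun n hn => hreal n hn _ (hz_fin n hn)]
  exact_mod_cast key

/-- One-cycle estimate for the splitting proximal point algorithm. -/
theorem one_cycle_estimate
    {H : Type*} [MetricSpace H] [CompleteSpace H] (G : Hadamard H)
    (N : ℕ) (hN : 1 ≤ N)
    (fs : ℕ → H → EReal)
    (hfs_ne_bot : ∀ n ∈ Finset.Icc 1 N, ∀ x : H, fs n x ≠ ⊥)
    (hfs_proper : ∀ n ∈ Finset.Icc 1 N, ∃ x : H, fs n x ≠ ⊤)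
    (hfs_conv : ∀ n ∈ Finset.Icc 1 N, GeoConvex G (fs n))
    (hfs_lsc : ∀ n ∈ Finset.Icc 1 N, LowerSemicontinuous (fs n))
    (lam L : ℝ) (hlam : 0 < lam) (hL : 0 < L)
    (y : ℕ → H)
    (hmin : ∀ n ∈ Finset.Icc 1 N, ∀ z : H,
      fs n (y n) + ((1 / (2 * lam) * dist (y (n - 1)) (y n) ^ 2 : ℝ) : EReal)
        ≤ fs n z + ((1 / (2 * lam) * dist (y (n - 1)) z ^ 2 : ℝ) : EReal))
    (hlip₀ : ∀ n ∈ Finset.Icc 1 N,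
      fs n (y 0) - fs n (y n) ≤ ((L * dist (y 0) (y n) : ℝ) : EReal))
    (hlip₁ : ∀ n ∈ Finset.Icc 1 N,
      fs n (y (n - 1)) - fs n (y n) ≤ ((L * dist (y (n - 1)) (y n) : ℝ) : EReal))
    (z : H) (hz : (∑ n ∈ Finset.Icc 1 N, fs n z) < ⊤) :
    ((dist (y N) z ^ 2 : ℝ) : EReal)
      ≤ ((dist (y 0) z ^ 2 : ℝ) : EReal)
          - ((2 * lam : ℝ) : EReal)
            * ((∑ n ∈ Finset.Icc 1 N, fs n (y 0)) - ∑ n ∈ Finset.Icc 1 N, fs n z)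
          + ((2 * lam ^ 2 * L ^ 2 * (N : ℝ) * ((N : ℝ) + 1) : ℝ) : EReal) :=
  one_cycle_estimate_general G N fs hfs_ne_bot hfs_conv lam L hlam hL y hmin hlip₀ hlip₁ z hz
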